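/- arXiv:2306.08328 — 2 statements merged into one kernel-verified Lean document; each statement's English description precedes it below -/
import Mathlib

section
/- Let α ∈ (0,1), let B > 0, let q be a probability density on ℝ supported in [−B,B], and let p_T be a probability density on ℝ with ∫_ℝ |x| p_T(x) dx < ∞ and ∫_ℝ p_T(x) |log(p_T(x)/ρ_α(x))| dx < ∞. Let ω_α(x) = (1/α) ρ(x/α) · H(α,x). Then the integral ∫_ℝ p_T(x) log(p_T(x)/ω_α(x)) dx is well defined and finite, and ∫_ℝ p_T(x) log(p_T(x)/ω_α(x)) dx = ∫_ℝ p_T(x) log(p_T(x)/ρ_α(x)) dx + F(α), where F(α) = −∫_ℝ p_T(x) log H(α,x) dx. -/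
open MeasureTheory Real Filter
open scoped ENNReal Topology

/-- The standard Gaussian density on `ℝ`: `ρ(x) = (2π)^{-1/2} exp(-x²/2)`. -/
noncomputable def stdGaussianDensity (x : ℝ) : ℝ :=
  (Real.sqrt (2 * Real.pi))⁻¹ * Real.exp (-x ^ 2 / 2)

/-- The density `ρ_α(x) = (1/α) ρ(x/α)` of the centered Gaussian with variance `α²`. -/
noncomputable def rhoAlpha (α x : ℝ) : ℝ :=
  (1 / α) * stdGaussianDensity (x / α)

/-- The correction factor `H(α,x) = ∫ ν, exp(-(1/(2α²))((1-α)² ν² - 2(1-α) x ν)) q(ν) dν`. -/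
noncomputable def Hfun (q : ℝ → ℝ) (α x : ℝ) : ℝ :=
  ∫ ν : ℝ, Real.exp (-(1 / (2 * α ^ 2)) * ((1 - α) ^ 2 * ν ^ 2 - 2 * (1 - α) * x * ν)) * q ν

/-- The density `ω_α(x) = (1/α) ρ(x/α) · H(α,x)` of `(1-α)X' + αε`. -/
noncomputable def omegaFun (q : ℝ → ℝ) (α x : ℝ) : ℝ :=
  (1 / α) * stdGaussianDensity (x / α) * Hfun q α x

/-!
Since `ω_α = ρ_α · H(α, ·)`, the integrand `p_T log(p_T/ω_α)` splits pointwise as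
`p_T log(p_T/ρ_α) - p_T log H`. The first term is integrable by assumption. For the second,
on the support `[-B, B]` of `q` the exponent in `H(α, x)` is bounded in absolute value by
`c(x) = ((1-α)² B² + 2|1-α| B |x|) / (2α²)`, so averaging against the probability density `q`
gives `e^{-c(x)} ≤ H(α, x) ≤ e^{c(x)}`, i.e. `|log H(α, x)| ≤ c(x)`; this affine bound in `|x|`
is integrable against `p_T` because `p_T` has a finite first moment.
-/

section ExpAverage

variable {X : Type*} {q f : X → ℝ} {C : ℝ}

lemma exp_mul_mem_Icc_of_abs_le (hq_nonneg : ∀ x, 0 ≤ q x)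
    (hfC : ∀ x ∈ Function.support q, |f x| ≤ C) (x : X) :
    exp (f x) * q x ∈ Set.Icc (exp (-C) * q x) (exp C * q x) := by
  by_cases hqx : q x = 0
  · simp [hqx]
  · obtain ⟨hlo, hhi⟩ := abs_le.mp (hfC x hqx)
    exact ⟨mul_le_mul_of_nonneg_right (exp_le_exp.2 hlo) (hq_nonneg x),
      mul_le_mul_of_nonneg_right (exp_le_exp.2 hhi) (hq_nonneg x)⟩

variable [MeasurableSpace X] {μ : Measure X}

lemma integrable_exp_mul_of_abs_le (hq : Integrable q μ) (hq_nonneg : ∀ x, 0 ≤ q x)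
    (hf : AEStronglyMeasurable f μ) (hfC : ∀ x ∈ Function.support q, |f x| ≤ C) :
    Integrable (fun x => exp (f x) * q x) μ := by
  refine (hq.const_mul (exp C)).mono'
    ((continuous_exp.comp_aestronglyMeasurable hf).mul hq.aestronglyMeasurable)
    (Eventually.of_forall fun x => ?_)
  rw [norm_of_nonneg (mul_nonneg (exp_pos _).le (hq_nonneg x))]
  exact (exp_mul_mem_Icc_of_abs_le hq_nonneg hfC x).2

lemma integral_exp_mul_mem_Icc (hq : Integrable q μ) (hq_nonneg : ∀ x, 0 ≤ q x)
    (hq_one : ∫ x, q x ∂μ = 1) (hf : AEStronglyMeasurable f μ)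
    (hfC : ∀ x ∈ Function.support q, |f x| ≤ C) :
    ∫ x, exp (f x) * q x ∂μ ∈ Set.Icc (exp (-C)) (exp C) := by
  have hint := integrable_exp_mul_of_abs_le hq hq_nonneg hf hfC
  have hbounds := exp_mul_mem_Icc_of_abs_le hq_nonneg hfC
  constructor
  · calc exp (-C) = ∫ x, exp (-C) * q x ∂μ := by rw [integral_const_mul, hq_one, mul_one]
      _ ≤ _ := integral_mono (hq.const_mul _) hint fun x => (hbounds x).1
  · calc _ ≤ ∫ x, exp C * q x ∂μ := integral_mono hint (hq.const_mul _) fun x => (hbounds x).2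
      _ = exp C := by rw [integral_const_mul, hq_one, mul_one]

end ExpAverage

lemma abs_exponent_le (α B x ν : ℝ) (hν : |ν| ≤ B) :
    |-(1 / (2 * α ^ 2)) * ((1 - α) ^ 2 * ν ^ 2 - 2 * (1 - α) * x * ν)|
      ≤ ((1 - α) ^ 2 * B ^ 2 + 2 * |1 - α| * B * |x|) / (2 * α ^ 2) := by
  have hB : 0 ≤ B := (abs_nonneg ν).trans hν
  have hsq : ν ^ 2 ≤ B ^ 2 := by rw [← sq_abs]; exact pow_le_pow_left₀ (abs_nonneg ν) hν 2
  have hlin : |2 * (1 - α) * x * ν| ≤ 2 * |1 - α| * B * |x| := by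
    rw [abs_mul, abs_mul, abs_mul, abs_two, mul_right_comm _ |x|]
    gcongr
  rw [abs_mul, abs_neg, abs_of_nonneg (by positivity), one_div_mul_eq_div]
  gcongr
  calc |(1 - α) ^ 2 * ν ^ 2 - 2 * (1 - α) * x * ν|
      ≤ |(1 - α) ^ 2 * ν ^ 2| + |2 * (1 - α) * x * ν| := abs_sub _ _
    _ ≤ (1 - α) ^ 2 * B ^ 2 + 2 * |1 - α| * B * |x| := by
      rw [abs_of_nonneg (by positivity)]
      gcongr

section Hfun

variable {q : ℝ → ℝ} {B : ℝ}

lemma measurable_Hfun (hq : Measurable q) (α : ℝ) : Measurable (Hfun q α) := by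
  have hintegrand : StronglyMeasurable fun p : ℝ × ℝ =>
      exp (-(1 / (2 * α ^ 2)) * ((1 - α) ^ 2 * p.2 ^ 2 - 2 * (1 - α) * p.1 * p.2)) * q p.2 :=
    ((measurable_exp.comp (by fun_prop)).mul (hq.comp measurable_snd)).stronglyMeasurable
  exact hintegrand.integral_prod_right'.measurable

variable (hq : Integrable q) (hq_nonneg : ∀ x, 0 ≤ q x) (hq_one : ∫ x, q x = 1)
  (hq_supp : Function.support q ⊆ Set.Icc (-B) B)
include hq hq_nonneg hq_one hq_supp

lemma Hfun_mem_Icc (α x : ℝ) :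
    Hfun q α x ∈ Set.Icc
      (exp (-(((1 - α) ^ 2 * B ^ 2 + 2 * |1 - α| * B * |x|) / (2 * α ^ 2))))
      (exp (((1 - α) ^ 2 * B ^ 2 + 2 * |1 - α| * B * |x|) / (2 * α ^ 2))) :=
  integral_exp_mul_mem_Icc hq hq_nonneg hq_one (by fun_prop)
    fun ν hν => abs_exponent_le α B x ν (abs_le.mpr (hq_supp hν))

lemma Hfun_pos (α x : ℝ) : 0 < Hfun q α x :=
  (exp_pos _).trans_le (Hfun_mem_Icc hq hq_nonneg hq_one hq_supp α x).1

lemma abs_log_Hfun_le (α x : ℝ) :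
    |log (Hfun q α x)| ≤ ((1 - α) ^ 2 * B ^ 2 + 2 * |1 - α| * B * |x|) / (2 * α ^ 2) := by
  obtain ⟨hlo, hhi⟩ := Hfun_mem_Icc hq hq_nonneg hq_one hq_supp α x
  have hpos := Hfun_pos hq hq_nonneg hq_one hq_supp α x
  exact abs_le.mpr ⟨(le_log_iff_exp_le hpos).mpr hlo, (log_le_iff_le_exp hpos).mpr hhi⟩

lemma integrable_mul_log_Hfun (hq_meas : Measurable q) {p : ℝ → ℝ} (hp_meas : Measurable p)
    (hp_nonneg : ∀ x, 0 ≤ p x) (hp : Integrable p) (hp_mom : Integrable fun x => |x| * p x)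
    (α : ℝ) : Integrable fun x => p x * log (Hfun q α x) := by
  refine (((hp.const_mul ((1 - α) ^ 2 * B ^ 2 / (2 * α ^ 2))).add
    (hp_mom.const_mul (2 * |1 - α| * B / (2 * α ^ 2))))).mono'
    (hp_meas.mul (measurable_log.comp (measurable_Hfun hq_meas α))).aestronglyMeasurable
    (Eventually.of_forall fun x => ?_)
  rw [norm_mul, norm_of_nonneg (hp_nonneg x), norm_eq_abs]
  calc p x * |log (Hfun q α x)|
      ≤ p x * (((1 - α) ^ 2 * B ^ 2 + 2 * |1 - α| * B * |x|) / (2 * α ^ 2)) :=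
        mul_le_mul_of_nonneg_left (abs_log_Hfun_le hq hq_nonneg hq_one hq_supp α x) (hp_nonneg x)
    _ = _ := by simp only [Pi.add_apply]; ring

end Hfun

lemma rhoAlpha_ne_zero {α : ℝ} (hα : α ≠ 0) (x : ℝ) : rhoAlpha α x ≠ 0 := by
  unfold rhoAlpha stdGaussianDensity
  have := pi_pos
  positivity

lemma measurable_rhoAlpha (α : ℝ) : Measurable (rhoAlpha α) := by
  unfold rhoAlpha stdGaussianDensity
  fun_prop

lemma mul_log_div_mul {p r h : ℝ} (hr : r ≠ 0) (hh : h ≠ 0) :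
    p * log (p / (r * h)) = p * log (p / r) - p * log h := by
  rcases eq_or_ne p 0 with rfl | hp
  · simp
  · rw [← div_div, log_div (div_ne_zero hp hr) hh, mul_sub]

theorem statement7_general (α : ℝ) (hα : α ∈ Set.Ioo (0 : ℝ) 1) (B : ℝ)
    (q : ℝ → ℝ) (hq_meas : Measurable q) (hq_nonneg : ∀ x, 0 ≤ q x)
    (hq_one : ∫ x, q x = 1) (hq_supp : Function.support q ⊆ Set.Icc (-B) B)
    (pT : ℝ → ℝ) (hpT_meas : Measurable pT) (hpT_nonneg : ∀ x, 0 ≤ pT x)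
    (hpT_one : ∫ x, pT x = 1)
    (hpT_mom : Integrable (fun x => |x| * pT x))
    (hpT_kl : Integrable (fun x => pT x * |Real.log (pT x / rhoAlpha α x)|)) :
    Integrable (fun x => pT x * Real.log (pT x / omegaFun q α x)) ∧
    ∫ x : ℝ, pT x * Real.log (pT x / omegaFun q α x)
      = (∫ x : ℝ, pT x * Real.log (pT x / rhoAlpha α x))
        + (-∫ x : ℝ, pT x * Real.log (Hfun q α x)) := by
  have hq : Integrable q := .of_integral_ne_zero (by rw [hq_one]; exact one_ne_zero)
  have hpT : Integrable pT := .of_integral_ne_zero (by rw [hpT_one]; exact one_ne_zero)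
  have hsplit : (fun x => pT x * log (pT x / omegaFun q α x))
      = fun x => pT x * log (pT x / rhoAlpha α x) - pT x * log (Hfun q α x) :=
    funext fun x => mul_log_div_mul (rhoAlpha_ne_zero hα.1.ne' x)
      (Hfun_pos hq hq_nonneg hq_one hq_supp α x).ne'
  have hkl : Integrable fun x => pT x * log (pT x / rhoAlpha α x) :=
    hpT_kl.mono' (hpT_meas.mul
        (measurable_log.comp (hpT_meas.div (measurable_rhoAlpha α)))).aestronglyMeasurable
      (Eventually.of_forall fun x => by rw [norm_mul, norm_of_nonneg (hpT_nonneg x), norm_eq_abs])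
  have hlogH := integrable_mul_log_Hfun hq hq_nonneg hq_one hq_supp hq_meas hpT_meas hpT_nonneg
    hpT hpT_mom α
  rw [hsplit]
  exact ⟨hkl.sub hlogH, by rw [integral_sub hkl hlogH, sub_eq_add_neg]⟩

/-- KL decomposition: with `q` a probability density supported in `[-B,B]` and `p_T` a
probability density with finite first absolute moment and finite `KL(p_T‖ρ_α)`-integrand,
the integral `∫ p_T log(p_T/ω_α)` is well defined and finite, and equals
`∫ p_T log(p_T/ρ_α) + F(α)` with `F(α) = -∫ p_T(x) log H(α,x) dx`. -/
theorem statement7 (α : ℝ) (hα : α ∈ Set.Ioo (0 : ℝ) 1) (B : ℝ) (hB : 0 < B)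
    (q : ℝ → ℝ) (hq_meas : Measurable q) (hq_nonneg : ∀ x, 0 ≤ q x)
    (hq_one : ∫ x, q x = 1) (hq_supp : Function.support q ⊆ Set.Icc (-B) B)
    (pT : ℝ → ℝ) (hpT_meas : Measurable pT) (hpT_nonneg : ∀ x, 0 ≤ pT x)
    (hpT_one : ∫ x, pT x = 1)
    (hpT_mom : Integrable (fun x => |x| * pT x))
    (hpT_kl : Integrable (fun x => pT x * |Real.log (pT x / rhoAlpha α x)|)) :
    Integrable (fun x => pT x * Real.log (pT x / omegaFun q α x)) ∧
    ∫ x : ℝ, pT x * Real.log (pT x / omegaFun q α x)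
      = (∫ x : ℝ, pT x * Real.log (pT x / rhoAlpha α x))
        + (-∫ x : ℝ, pT x * Real.log (Hfun q α x)) :=
  statement7_general α hα B q hq_meas hq_nonneg hq_one hq_supp pT hpT_meas hpT_nonneg hpT_one
    hpT_mom hpT_kl
end

section
/- Let B > 0 and let μ be a Borel probability measure on ℝ whose support is contained in [−B,B]. For β ∈ (0,1) define μ_β as the convolution of the pushforward of μ under x ↦ βx with the centered Gaussian measure of variance 1−β². Then KL(μ_β ‖ N(0,1)) → 0 as β → 0 from the right, where N(0,1) is the standard Gaussian measure on ℝ and KL denotes the Kullback–Leibler divergence. -/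
open MeasureTheory Real Filter ProbabilityTheory
open scoped ENNReal Topology

open Classical in
/-- The Kullback–Leibler divergence `KL(μ‖ν)`, as an element of `ℝ≥0∞`: it equals
`∫ log(dμ/dν) dμ` when `μ ≪ ν` and this integral is well defined, and `∞` otherwise. -/
noncomputable def klDivergence (μ ν : Measure ℝ) : ℝ≥0∞ :=
  if μ ≪ ν ∧ Integrable (llr μ ν) μ then ENNReal.ofReal (∫ x, llr μ ν x ∂μ) else ⊤

/-- For `β ∈ (0,1)`, the law of `βX + √(1-β²)·ε` for `X ∼ μ` independent of a standard
Gaussian `ε`: the convolution of the pushforward of `μ` under `x ↦ βx` with the centered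
Gaussian of variance `1-β²`. -/
noncomputable def muBeta (μ : Measure ℝ) (β : ℝ) : Measure ℝ :=
  Measure.map (fun p : ℝ × ℝ => p.1 + p.2)
    ((Measure.map (fun x : ℝ => β * x) μ).prod
      (gaussianReal 0 (Real.toNNReal (1 - β ^ 2))))

open scoped NNReal

/-! With `ν` the law of `βX`, supported in `[-βB, βB]`, and `v = 1 - β²`, the measure `μ_β` is
`ν ∗ N(0, v)`, whose density with respect to `N(0, 1)` is `y ↦ ∫ exp ℓ(x, y) dν(x)`, where
`ℓ(x, y) = -(log v)/2 + (y² - (y - x)²/v)/2` is the log-density of `N(x, v)` against `N(0, 1)`.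
For `|x| ≤ a` one has `|ℓ(x, y) + (log v)/2| ≤ K (1 + y²)` with `K = (|1 - v| + a + a²)/(2v)`,
and averaging over `ν` preserves this, so the log-likelihood ratio of `μ_β` is within `K (1 + y²)`
of `-(log v)/2`. As `∫ y² dμ_β = ∫ x² dν + v ≤ a² + v`, this gives
`KL(μ_β ‖ N(0,1)) ≤ -(log v)/2 + K (1 + a² + v)`, and with `a = βB` the right side tends to `0`. -/

lemma exp_neg_log_div_two {v : ℝ} (hv : 0 < v) : exp (-log v / 2) = (√v)⁻¹ := by
  rw [Real.sqrt_eq_rpow, ← Real.rpow_neg hv.le, Real.rpow_def_of_pos hv]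
  ring_nf

/-- The logarithm of the density of `N(m, v)` with respect to `N(0, 1)` at `y`. -/
noncomputable def gaussianLLR (m : ℝ) (v : ℝ≥0) (y : ℝ) : ℝ :=
  -log v / 2 + (y ^ 2 - (y - m) ^ 2 / v) / 2

lemma gaussianPDFReal_eq_mul_exp (m : ℝ) {v : ℝ≥0} (hv : v ≠ 0) (y : ℝ) :
    gaussianPDFReal m v y = gaussianPDFReal 0 1 y * exp (gaussianLLR m v y) := by
  have hv' : (0 : ℝ) < v := by positivity
  simp only [gaussianPDFReal, gaussianLLR, NNReal.coe_one, mul_one, sub_zero]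
  rw [Real.exp_add, exp_neg_log_div_two hv', Real.sqrt_mul (by positivity), mul_inv,
    mul_mul_mul_comm, ← Real.exp_add]
  congr 2
  field_simp
  ring

lemma abs_sq_sub_sq_div_le {v m a : ℝ} (hv : 0 < v) (hm : |m| ≤ a) (y : ℝ) :
    |(y ^ 2 - (y - m) ^ 2 / v) / 2| ≤ (|1 - v| + a + a ^ 2) / (2 * v) * (1 + y ^ 2) := by
  have hy : 2 * |y| ≤ 1 + y ^ 2 := by nlinarith [sq_abs y, sq_nonneg (|y| - 1)]
  have hmy : |2 * m * y| ≤ a * (1 + y ^ 2) := by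
    rw [abs_mul, abs_mul, abs_two]; nlinarith [abs_nonneg m, abs_nonneg y]
  have hm2 : |m ^ 2| ≤ a ^ 2 * (1 + y ^ 2) := by
    rw [abs_pow]; nlinarith [abs_nonneg m, sq_nonneg y, sq_nonneg a]
  have hvy : |(v - 1) * y ^ 2| ≤ |1 - v| * (1 + y ^ 2) := by
    rw [abs_mul, abs_sub_comm, abs_of_nonneg (sq_nonneg y)]
    nlinarith [abs_nonneg (1 - v)]
  have hform : (y ^ 2 - (y - m) ^ 2 / v) / 2 =
      ((v - 1) * y ^ 2 + 2 * m * y - m ^ 2) / (2 * v) := by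
    field_simp; ring
  rw [hform, abs_div, abs_of_pos (by positivity : (0:ℝ) < 2 * v), div_mul_eq_mul_div,
    div_le_div_iff_of_pos_right (by positivity)]
  calc |(v - 1) * y ^ 2 + 2 * m * y - m ^ 2|
      ≤ |(v - 1) * y ^ 2| + |2 * m * y| + |m ^ 2| :=
        (abs_sub _ _).trans (by gcongr; exact abs_add_le _ _)
    _ ≤ _ := by linarith

lemma conv_gaussianReal_eq_withDensity (ν : Measure ℝ) [SFinite ν] (m : ℝ) {v : ℝ≥0}
    (hv : v ≠ 0) :
    ν ∗ gaussianReal m v = volume.withDensity (fun y => ∫⁻ x, gaussianPDF (x + m) v y ∂ν) := by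
  ext s hs
  rw [withDensity_apply _ hs, lintegral_lintegral_swap (by fun_prop),
    ← lintegral_indicator_one hs, Measure.lintegral_conv (measurable_one.indicator hs)]
  refine lintegral_congr fun x => ?_
  rw [← lintegral_map (measurable_one.indicator hs) (measurable_const_add x),
    gaussianReal_map_const_add, lintegral_indicator_one hs, add_comm, gaussianReal_apply _ hv]

lemma measurable_lintegral_exp_gaussianLLR (ν : Measure ℝ) [SFinite ν] (v : ℝ≥0) :
    Measurable (fun y => ∫⁻ x, ENNReal.ofReal (exp (gaussianLLR x v y)) ∂ν) := by
  refine Measurable.lintegral_prod_right' (ν := ν)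
    (f := fun p : ℝ × ℝ => ENNReal.ofReal (exp (gaussianLLR p.2 v p.1))) ?_
  unfold gaussianLLR; fun_prop

lemma conv_gaussianReal_eq_withDensity_gaussianReal (ν : Measure ℝ) [SFinite ν] {v : ℝ≥0}
    (hv : v ≠ 0) :
    ν ∗ gaussianReal 0 v = (gaussianReal 0 1).withDensity
      (fun y => ∫⁻ x, ENNReal.ofReal (exp (gaussianLLR x v y)) ∂ν) := by
  rw [conv_gaussianReal_eq_withDensity ν 0 hv, gaussianReal_of_var_ne_zero 0 one_ne_zero,
    ← withDensity_mul _ (measurable_gaussianPDF 0 1)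
      (measurable_lintegral_exp_gaussianLLR ν v)]
  congr 1
  funext y
  rw [Pi.mul_apply, ← lintegral_const_mul' (gaussianPDF 0 1 y) _ ENNReal.ofReal_ne_top]
  refine lintegral_congr fun x => ?_
  rw [add_zero, gaussianPDF, gaussianPDF, gaussianPDFReal_eq_mul_exp x hv,
    ENNReal.ofReal_mul (gaussianPDFReal_nonneg 0 1 y)]

lemma abs_log_toReal_lintegral_exp_sub_le {α : Type*} [MeasurableSpace α] {ν : Measure α}
    [IsProbabilityMeasure ν] {f : α → ℝ} {c r : ℝ} (hf : ∀ᵐ x ∂ν, |f x - c| ≤ r) :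
    |log (∫⁻ x, ENNReal.ofReal (exp (f x)) ∂ν).toReal - c| ≤ r := by
  have hlower : ENNReal.ofReal (exp (c - r)) ≤ ∫⁻ x, ENNReal.ofReal (exp (f x)) ∂ν := by
    calc ENNReal.ofReal (exp (c - r)) = ∫⁻ _, ENNReal.ofReal (exp (c - r)) ∂ν := by simp
      _ ≤ _ := lintegral_mono_ae <| hf.mono fun x hx => by
          gcongr; linarith [(abs_le.mp hx).1]
  have hupper : ∫⁻ x, ENNReal.ofReal (exp (f x)) ∂ν ≤ ENNReal.ofReal (exp (c + r)) := by
    calc ∫⁻ x, ENNReal.ofReal (exp (f x)) ∂ν ≤ ∫⁻ _, ENNReal.ofReal (exp (c + r)) ∂ν :=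
          lintegral_mono_ae <| hf.mono fun x hx => by gcongr; linarith [(abs_le.mp hx).2]
      _ = _ := by simp
  have hne : ∫⁻ x, ENNReal.ofReal (exp (f x)) ∂ν ≠ ⊤ :=
    ne_top_of_le_ne_top ENNReal.ofReal_ne_top hupper
  have hlo := (ENNReal.ofReal_le_iff_le_toReal hne).mp hlower
  have hup := ENNReal.toReal_le_of_le_ofReal (exp_pos _).le hupper
  rw [abs_sub_le_iff]
  constructor
  · linarith [(log_le_log ((exp_pos _).trans_le hlo) hup).trans_eq (log_exp _)]
  · linarith [(log_exp (c - r)).symm.trans_le (log_le_log (exp_pos _) hlo)]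

lemma abs_llr_conv_gaussianReal_add_le (ν : Measure ℝ) [IsProbabilityMeasure ν] {a : ℝ}
    (hν : ∀ᵐ x ∂ν, |x| ≤ a) {v : ℝ≥0} (hv : v ≠ 0) :
    ∀ᵐ y ∂(ν ∗ gaussianReal 0 v),
      |llr (ν ∗ gaussianReal 0 v) (gaussianReal 0 1) y + log v / 2| ≤
        (|1 - (v : ℝ)| + a + a ^ 2) / (2 * v) * (1 + y ^ 2) := by
  rw [conv_gaussianReal_eq_withDensity_gaussianReal ν hv]
  filter_upwards [withDensity_absolutelyContinuous _ _
    (Measure.rnDeriv_withDensity _ (measurable_lintegral_exp_gaussianLLR ν v))] with y hy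
  rw [llr, hy, ← sub_neg_eq_add, ← neg_div]
  refine abs_log_toReal_lintegral_exp_sub_le (hν.mono fun x hx => ?_)
  rw [gaussianLLR, add_sub_cancel_left]
  exact abs_sq_sub_sq_div_le (NNReal.coe_pos.2 (pos_iff_ne_zero.2 hv)) hx y

lemma integrable_add_sq_gaussianReal (x : ℝ) (v : ℝ≥0) :
    Integrable (fun z => (x + z) ^ 2) (gaussianReal 0 v) :=
  ((memLp_const x).add (memLp_id_gaussianReal 2)).integrable_sq

lemma integral_add_sq_gaussianReal (x : ℝ) (v : ℝ≥0) :
    ∫ z, (x + z) ^ 2 ∂gaussianReal 0 v = x ^ 2 + v := by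
  have hz : Integrable (fun z : ℝ => z) (gaussianReal 0 v) :=
    (memLp_id_gaussianReal 1).integrable le_rfl
  have hz2 : Integrable (fun z : ℝ => z ^ 2) (gaussianReal 0 v) :=
    (memLp_id_gaussianReal 2).integrable_sq
  have hsq : ∫ z, z ^ 2 ∂gaussianReal 0 v = v := by
    rw [← variance_of_integral_eq_zero aemeasurable_id' integral_id_gaussianReal,
      variance_fun_id_gaussianReal]
  simp_rw [add_sq]
  rw [integral_add (f := fun z => x ^ 2 + 2 * x * z) ((integrable_const _).add (hz.const_mul _))
    hz2, integral_add (integrable_const _) (hz.const_mul _), integral_const_mul,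
    integral_id_gaussianReal, hsq]
  simp

lemma integrable_sq_conv_gaussianReal {ν : Measure ℝ} [IsProbabilityMeasure ν]
    (hν : Integrable (fun x => x ^ 2) ν) (v : ℝ≥0) :
    Integrable (fun y => y ^ 2) (ν ∗ gaussianReal 0 v) := by
  refine (integrable_conv_iff (by fun_prop)).2
    ⟨.of_forall (integrable_add_sq_gaussianReal · v), ?_⟩
  simp_rw [Real.norm_eq_abs, abs_sq, integral_add_sq_gaussianReal]
  exact hν.add (integrable_const _)

lemma integral_sq_conv_gaussianReal {ν : Measure ℝ} [IsProbabilityMeasure ν]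
    (hν : Integrable (fun x => x ^ 2) ν) (v : ℝ≥0) :
    ∫ y, y ^ 2 ∂(ν ∗ gaussianReal 0 v) = ∫ x, x ^ 2 ∂ν + v := by
  simp_rw [integral_conv (integrable_sq_conv_gaussianReal hν v),
    integral_add_sq_gaussianReal]
  rw [integral_add hν (integrable_const _)]
  simp

lemma klDivergence_le_of_abs_llr_sub_le {ρ ν : Measure ℝ} [IsProbabilityMeasure ρ] (hρν : ρ ≪ ν)
    {c : ℝ} {g : ℝ → ℝ} (hg : Integrable g ρ) (hbound : ∀ᵐ y ∂ρ, |llr ρ ν y - c| ≤ g y) :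
    klDivergence ρ ν ≤ ENNReal.ofReal (c + ∫ y, g y ∂ρ) := by
  have hint : Integrable (llr ρ ν) ρ := by
    refine ((integrable_const |c|).add hg).mono' (measurable_llr _ _).aestronglyMeasurable ?_
    filter_upwards [hbound] with y hy
    rw [Real.norm_eq_abs, Pi.add_apply]
    linarith [abs_sub_abs_le_abs_sub (llr ρ ν y) c]
  rw [klDivergence, if_pos ⟨hρν, hint⟩]
  refine ENNReal.ofReal_le_ofReal ?_
  calc ∫ y, llr ρ ν y ∂ρ ≤ ∫ y, c + g y ∂ρ :=
        integral_mono_ae hint ((integrable_const c).add hg)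
          (hbound.mono fun y hy => by linarith [le_abs_self (llr ρ ν y - c)])
    _ = c + ∫ y, g y ∂ρ := by simp [integral_add (integrable_const c) hg]

theorem klDivergence_conv_gaussianReal_le (ν : Measure ℝ) [IsProbabilityMeasure ν] {a : ℝ}
    (hν : ∀ᵐ x ∂ν, |x| ≤ a) {v : ℝ≥0} (hv : v ≠ 0) :
    klDivergence (ν ∗ gaussianReal 0 v) (gaussianReal 0 1) ≤
      ENNReal.ofReal (-log v / 2 + (|1 - (v : ℝ)| + a + a ^ 2) / (2 * v) * (1 + a ^ 2 + v)) := by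
  set K := (|1 - (v : ℝ)| + a + a ^ 2) / (2 * v)
  have ha : 0 ≤ a := let ⟨x, hx⟩ := hν.exists; (abs_nonneg x).trans hx
  have hK : 0 ≤ K := by positivity
  have hsq_le : ∀ᵐ x ∂ν, x ^ 2 ≤ a ^ 2 := hν.mono fun x hx => by
    rw [← sq_abs]; exact pow_le_pow_left₀ (abs_nonneg x) hx 2
  have hν2 : Integrable (fun x => x ^ 2) ν := Integrable.of_bound (by fun_prop) (a ^ 2)
    (hsq_le.mono fun x hx => by rwa [Real.norm_eq_abs, abs_sq])
  have hac : ν ∗ gaussianReal 0 v ≪ gaussianReal 0 1 :=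
    conv_gaussianReal_eq_withDensity_gaussianReal ν hv ▸ withDensity_absolutelyContinuous _ _
  have hg : Integrable (fun y => K * (1 + y ^ 2)) (ν ∗ gaussianReal 0 v) :=
    ((integrable_const 1).add (integrable_sq_conv_gaussianReal hν2 v)).const_mul K
  refine (klDivergence_le_of_abs_llr_sub_le (c := -log v / 2) hac hg ?_).trans
    (ENNReal.ofReal_le_ofReal ?_)
  · simpa only [sub_neg_eq_add, neg_div] using abs_llr_conv_gaussianReal_add_le ν hν hv
  · rw [integral_const_mul,
      integral_add (integrable_const 1) (integrable_sq_conv_gaussianReal hν2 v),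
      integral_sq_conv_gaussianReal hν2 v]
    have : ∫ x, x ^ 2 ∂ν ≤ a ^ 2 := by
      simpa using integral_mono_ae hν2 (integrable_const (a ^ 2)) hsq_le
    simp only [integral_const, probReal_univ, smul_eq_mul, one_mul]
    linarith [mul_le_mul_of_nonneg_left this hK]

lemma muBeta_eq_conv (μ : Measure ℝ) (β : ℝ) :
    muBeta μ β = μ.map (β * ·) ∗ gaussianReal 0 (1 - β ^ 2).toNNReal := rfl

lemma ae_abs_map_const_mul_le {μ : Measure ℝ} {B : ℝ} (hsupp : μ (Set.Icc (-B) B)ᶜ = 0)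
    (β : ℝ) : ∀ᵐ x ∂(μ.map (β * ·)), |x| ≤ |β| * B := by
  rw [ae_map_iff (by fun_prop) (measurableSet_le (by fun_prop) (by fun_prop))]
  filter_upwards [compl_mem_ae_iff.mpr hsupp] with x hx
  rw [compl_compl] at hx
  rw [abs_mul]
  exact mul_le_mul_of_nonneg_left (abs_le.mpr hx) (abs_nonneg β)

theorem statement15_general (B : ℝ) (μ : Measure ℝ) [IsProbabilityMeasure μ]
    (hsupp : μ (Set.Icc (-B) B)ᶜ = 0) :
    Tendsto (fun β : ℝ => klDivergence (muBeta μ β) (gaussianReal 0 1))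
      (nhdsWithin 0 (Set.Ioi 0)) (nhds 0) := by
  set bound : ℝ → ℝ := fun β => -log (1 - β ^ 2) / 2 +
    (|1 - (1 - β ^ 2)| + |β| * B + (|β| * B) ^ 2) / (2 * (1 - β ^ 2)) *
      (1 + (|β| * B) ^ 2 + (1 - β ^ 2))
  have hbound : Tendsto (fun β => ENNReal.ofReal (bound β)) (𝓝 0) (𝓝 0) := by
    have : ContinuousAt bound 0 := by fun_prop (disch := norm_num)
    simpa [bound] using ENNReal.tendsto_ofReal this.tendsto
  refine tendsto_of_tendsto_of_tendsto_of_le_of_le' tendsto_const_nhds hbound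
    (.of_forall fun _ => zero_le) ?_ |>.mono_left nhdsWithin_le_nhds
  filter_upwards [Ioo_mem_nhds neg_one_lt_zero one_pos] with β hβ
  have hv : 0 < 1 - β ^ 2 := by nlinarith [hβ.1, hβ.2]
  have : IsProbabilityMeasure (μ.map (β * ·)) := Measure.isProbabilityMeasure_map (by fun_prop)
  have := klDivergence_conv_gaussianReal_le _ (ae_abs_map_const_mul_le hsupp β)
    (Real.toNNReal_pos.mpr hv).ne'
  rw [Real.coe_toNNReal _ hv.le] at this
  rwa [muBeta_eq_conv]

/-- For a Borel probability measure `μ` on `ℝ` supported in `[-B,B]`,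
`KL(μ_β ‖ N(0,1)) → 0` as `β → 0` from the right. -/
theorem statement15 (B : ℝ) (hB : 0 < B) (μ : Measure ℝ) [IsProbabilityMeasure μ]
    (hsupp : μ (Set.Icc (-B) B)ᶜ = 0) :
    Tendsto (fun β : ℝ => klDivergence (muBeta μ β) (gaussianReal 0 1))
      (nhdsWithin 0 (Set.Ioi 0)) (nhds 0) :=
  statement15_general B μ hsupp
end
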